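/- Fix nonnegative integers m, n and a positive integer k with k ≤ n+1. The generating function, by total weight |α|+|β|, over pairs (α,β) where α is a strictly decreasing sequence of integers in [1,m], β is a strictly decreasing sequence of integers in [0,n], and length(β) − length(α) = k, equals q^{binom(k,2)} · [m+n+1 choose n−k+1]_q. -/

import Mathlib

/-!
Send a pair `(A, B)` to `S = (A + n) ∪ {x ≤ n | n - x ∉ B} ⊆ [0, m + n]`. This is a bijection onto
the subsets of size `b = n + 1 - k`, and `ΣS + n k = ΣA + ΣB + binom(n+1, 2)`. The subsets of
`[0, N)` of size `b`, weighted by their sum, have generating function `q^binom(b,2) [N choose b]_q`,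
by the q-Pascal recursion.
-/

open Finset

/-- The q-shifted factorial `(q;q)_r = ∏_{i=1}^r (1 - q^i)` in `ℚ(q)`. -/
noncomputable def qPoch (r : ℕ) : RatFunc ℚ :=
  ∏ i ∈ Finset.range r, (1 - (RatFunc.X : RatFunc ℚ) ^ (i + 1))

/-- The Gaussian binomial coefficient `[a choose b]_q`, zero outside `0 ≤ b ≤ a`. -/
noncomputable def qbinom (a : ℕ) (b : ℤ) : RatFunc ℚ :=
  if 0 ≤ b ∧ b ≤ (a : ℤ) then qPoch a / (qPoch b.toNat * qPoch (a - b.toNat)) else 0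

lemma one_sub_X_pow_ne_zero (j : ℕ) : (1 - (RatFunc.X : RatFunc ℚ) ^ (j + 1)) ≠ 0 := by
  rw [sub_ne_zero, ne_comm]
  intro h
  have := congrArg RatFunc.intDegree h
  rw [← RatFunc.algebraMap_X, ← map_pow, RatFunc.intDegree_polynomial, Polynomial.natDegree_X_pow,
    RatFunc.intDegree_one] at this
  omega

lemma qPoch_ne_zero (r : ℕ) : qPoch r ≠ 0 :=
  Finset.prod_ne_zero_iff.mpr fun i _ => one_sub_X_pow_ne_zero i

lemma qPoch_succ (r : ℕ) : qPoch (r + 1) = qPoch r * (1 - (RatFunc.X : RatFunc ℚ) ^ (r + 1)) :=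
  prod_range_succ _ _

lemma qbinom_add (b d : ℕ) : qbinom (b + d) b = qPoch (b + d) / (qPoch b * qPoch d) := by
  rw [qbinom, if_pos (by omega), Int.toNat_natCast, Nat.add_sub_cancel_left]

section subsetSumGF
variable {R : Type*} [CommSemiring R]

def subsetSumGF (q : R) (N b : ℕ) : R :=
  ∑ S ∈ (range N).powersetCard b, q ^ S.sum id

lemma subsetSumGF_zero_right (q : R) (N : ℕ) : subsetSumGF q N 0 = 1 := by
  simp [subsetSumGF]

lemma subsetSumGF_self (q : R) (N : ℕ) : subsetSumGF q N N = q ^ ∑ i ∈ range N, i := by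
  simpa [subsetSumGF] using congrArg (∑ S ∈ ·, q ^ S.sum id) (powersetCard_self (range N))

lemma subsetSumGF_succ_succ (q : R) (N b : ℕ) :
    subsetSumGF q (N + 1) (b + 1) = subsetSumGF q N (b + 1) + q ^ N * subsetSumGF q N b := by
  have hN : N ∉ range N := by simp
  have hNS : ∀ S ∈ (range N).powersetCard b, N ∉ S := fun S hS h =>
    hN ((mem_powersetCard.mp hS).1 h)
  rw [subsetSumGF, range_add_one, powersetCard_succ_insert hN, sum_union, sum_image, subsetSumGF,
    subsetSumGF, mul_sum]
  · congr 1
    refine sum_congr rfl fun S hS => ?_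
    rw [sum_insert (hNS S hS), pow_add, id]
  · intro S hS T hT h
    rw [← erase_insert (hNS S hS), ← erase_insert (hNS T hT), h]
  · rw [disjoint_left]
    intro S hS hS'
    obtain ⟨T, -, rfl⟩ := mem_image.mp hS'
    exact hN ((mem_powersetCard.mp hS).1 (mem_insert_self N T))
end subsetSumGF

lemma subsetSumGF_mul_qPoch (b d : ℕ) :
    subsetSumGF RatFunc.X (b + d) b * (qPoch b * qPoch d) =
      RatFunc.X ^ (∑ i ∈ range b, i) * qPoch (b + d) := by
  induction b generalizing d with
  | zero => simp [subsetSumGF_zero_right, qPoch]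
  | succ b ihb =>
    induction d with
    | zero => simp [subsetSumGF_self, qPoch]
    | succ d ihd =>
      have ihb' := ihb (d + 1)
      rw [show b + (d + 1) = b + 1 + d by omega] at ihb'
      rw [show b + 1 + (d + 1) = b + 1 + d + 1 by omega, subsetSumGF_succ_succ,
        qPoch_succ (b + 1 + d), qPoch_succ d]
      rw [qPoch_succ b, sum_range_succ] at ihd ⊢
      rw [qPoch_succ d] at ihb'
      linear_combination (1 - (RatFunc.X : RatFunc ℚ) ^ (d + 1)) * ihd +
        (RatFunc.X ^ (b + 1 + d) * (1 - (RatFunc.X : RatFunc ℚ) ^ (b + 1))) * ihb'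

lemma subsetSumGF_eq_qbinom (b d : ℕ) :
    subsetSumGF RatFunc.X (b + d) b = RatFunc.X ^ (∑ i ∈ range b, i) * qbinom (b + d) b := by
  rw [qbinom_add, mul_div_assoc', eq_div_iff (mul_ne_zero (qPoch_ne_zero b) (qPoch_ne_zero d)),
    subsetSumGF_mul_qPoch]

def reflCompl (n : ℕ) (C : Finset ℕ) : Finset ℕ :=
  (range (n + 1)).filter (fun x => n - x ∉ C)

section reflCompl
variable {n : ℕ} {C : Finset ℕ}

lemma reflCompl_subset : reflCompl n C ⊆ range (n + 1) :=
  filter_subset _ _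

lemma reflCompl_reflCompl (hC : C ⊆ range (n + 1)) : reflCompl n (reflCompl n C) = C := by
  ext x
  by_cases hx : x < n + 1
  · simp [reflCompl, hx, Nat.sub_sub_self (Nat.lt_succ_iff.mp hx)]
  · simpa [reflCompl, hx] using mt (@hC x) (by simpa using hx)

lemma sum_reflCompl_add_sum_reflect {M : Type*} [AddCommMonoid M] (hC : C ⊆ range (n + 1))
    (f : ℕ → M) :
    ∑ x ∈ reflCompl n C, f x + ∑ y ∈ C, f (n - y) = ∑ x ∈ range (n + 1), f x := by
  have hreflect : ∑ y ∈ C, f (n - y) = ∑ x ∈ (range (n + 1)).filter (fun x => n - x ∈ C), f x := by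
    calc ∑ y ∈ C, f (n - y)
        = ∑ y ∈ range (n + 1), if y ∈ C then f (n - y) else 0 := by
          rw [← sum_filter, filter_mem_eq_inter, inter_eq_right.mpr hC]
      _ = ∑ x ∈ range (n + 1), if n - x ∈ C then f x else 0 := by
          rw [← sum_range_reflect]
          refine sum_congr rfl fun x hx => ?_
          rw [show n + 1 - 1 - x = n - x by omega,
            show n - (n - x) = x by have := mem_range.mp hx; omega]
      _ = _ := (sum_filter _ _).symm
  rw [hreflect, reflCompl, add_comm, sum_filter_add_sum_filter_not]

lemma card_reflCompl_add_card (hC : C ⊆ range (n + 1)) :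
    (reflCompl n C).card + C.card = n + 1 := by
  have h := sum_reflCompl_add_sum_reflect hC (fun _ => 1)
  simpa only [← card_eq_sum_ones, card_range] using h

lemma sum_reflCompl_add_mul_card (hC : C ⊆ range (n + 1)) :
    (reflCompl n C).sum id + n * C.card = ∑ i ∈ range (n + 1), i + C.sum id := by
  have h := sum_reflCompl_add_sum_reflect hC id
  have hC' : ∑ y ∈ C, id (n - y) + C.sum id = n * C.card := by
    rw [← sum_add_distrib, mul_comm, sum_const_nat]
    intro y hy
    have := mem_range.mp (hC hy)
    simp only [id]; omega
  simp only [id] at h hC' ⊢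
  omega
end reflCompl

lemma sum_powersetCard_union {α M : Type*} [DecidableEq α] [AddCommMonoid M] {U V : Finset α}
    (hUV : Disjoint U V) (b : ℕ) (f : Finset α → M) :
    ∑ S ∈ (U ∪ V).powersetCard b, f S =
      ∑ P ∈ (U.powerset ×ˢ V.powerset).filter (fun P => P.1.card + P.2.card = b),
        f (P.1 ∪ P.2) := by
  have hsplit : ∀ S ⊆ U ∪ V, S ∩ U ∪ S ∩ V = S := fun S hS => by
    rw [← inter_union_distrib_left, inter_eq_left.mpr hS]
  have hdisj : ∀ {P Q : Finset α}, P ⊆ U → Q ⊆ V → Disjoint P Q := hUV.mono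
  refine sum_nbij' (fun S => (S ∩ U, S ∩ V)) (fun P => P.1 ∪ P.2) ?_ ?_ ?_ ?_ ?_
  · intro S hS
    obtain ⟨hSUV, rfl⟩ := mem_powersetCard.mp hS
    simp only [mem_filter, mem_product, mem_powerset]
    refine ⟨⟨inter_subset_right, inter_subset_right⟩, ?_⟩
    rw [← card_union_of_disjoint (hdisj inter_subset_right inter_subset_right), hsplit S hSUV]
  · rintro ⟨P, Q⟩ hPQ
    simp only [mem_filter, mem_product, mem_powerset] at hPQ
    obtain ⟨⟨hP, hQ⟩, rfl⟩ := hPQ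
    exact mem_powersetCard.mpr ⟨union_subset_union hP hQ, card_union_of_disjoint (hdisj hP hQ)⟩
  · intro S hS
    exact hsplit S (mem_powersetCard.mp hS).1
  · rintro ⟨P, Q⟩ hPQ
    simp only [mem_filter, mem_product, mem_powerset] at hPQ
    obtain ⟨⟨hP, hQ⟩, -⟩ := hPQ
    simp only [union_inter_distrib_right, inter_eq_left.mpr hP, inter_eq_left.mpr hQ,
      disjoint_iff_inter_eq_empty.mp (hdisj hP subset_rfl),
      disjoint_iff_inter_eq_empty.mp (hdisj subset_rfl hQ).symm, union_empty, empty_union]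
  · intro S hS
    rw [hsplit S (mem_powersetCard.mp hS).1]

lemma pow_mul_sum_synchronized {R : Type*} [CommSemiring R] (q : R) (m n k b : ℕ)
    (hb : b + k = n + 1) :
    q ^ (∑ i ∈ range (n + 1), i) *
      ∑ P ∈ ((Icc 1 m).powerset ×ˢ (Icc 0 n).powerset).filter (fun P => P.2.card = P.1.card + k),
        q ^ (P.1.sum id + P.2.sum id) =
      q ^ (n * k) * subsetSumGF q (m + n + 1) b := by
  set e := addRightEmbedding n
  have hrange : range (m + n + 1) = (Icc 1 m).map e ∪ range (n + 1) := by
    ext x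
    simp only [e, map_add_right_Icc, mem_union, mem_Icc, mem_range]
    omega
  have hdisj : Disjoint ((Icc 1 m).map e) (range (n + 1)) := by
    rw [map_add_right_Icc, disjoint_left]
    intro x hx hx'
    simp only [mem_Icc, mem_range] at hx hx'
    omega
  rw [← Nat.range_succ_eq_Icc_zero, subsetSumGF, hrange, sum_powersetCard_union hdisj, mul_sum,
    mul_sum]
  refine sum_nbij (fun P => (P.1.map e, reflCompl n P.2)) ?_ ?_ ?_ ?_
  · rintro ⟨A, B⟩ hAB
    simp only [mem_filter, mem_product, mem_powerset] at hAB ⊢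
    obtain ⟨⟨hA, hB⟩, hcard⟩ := hAB
    have := card_reflCompl_add_card hB
    refine ⟨⟨map_subset_map.mpr hA, reflCompl_subset⟩, ?_⟩
    rw [card_map]
    omega
  · rintro ⟨A, B⟩ hAB ⟨A', B'⟩ hAB' h
    simp only [mem_coe, mem_filter, mem_product, mem_powerset, Prod.mk.injEq] at hAB hAB' h
    refine Prod.ext (map_injective e h.1) ?_
    rw [← reflCompl_reflCompl hAB.1.2, h.2, reflCompl_reflCompl hAB'.1.2]
  · rintro ⟨P, C⟩ hPC
    simp only [mem_coe, mem_filter, mem_product, mem_powerset] at hPC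
    obtain ⟨⟨hP, hC⟩, hcard⟩ := hPC
    obtain ⟨A, hA, rfl⟩ := subset_map_iff.mp hP
    have := card_reflCompl_add_card hC
    refine ⟨(A, reflCompl n C), ?_, ?_⟩
    · simp only [mem_coe, mem_filter, mem_product, mem_powerset]
      rw [card_map] at hcard
      exact ⟨⟨hA, reflCompl_subset⟩, by omega⟩
    · simp only [reflCompl_reflCompl hC]
  · rintro ⟨A, B⟩ hAB
    simp only [mem_filter, mem_product, mem_powerset] at hAB
    obtain ⟨⟨hA, hB⟩, hcard⟩ := hAB
    have hw := sum_reflCompl_add_mul_card hB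
    rw [← pow_add, ← pow_add, sum_union (hdisj.mono (map_subset_map.mpr hA) reflCompl_subset),
      sum_map]
    rw [hcard, mul_add] at hw
    congr 1
    simp only [id, e, addRightEmbedding_apply, sum_add_distrib, sum_const, smul_eq_mul] at hw ⊢
    linarith

lemma sum_range_id_add (b k : ℕ) :
    ∑ i ∈ range (b + k), i = ∑ i ∈ range b, i + ∑ i ∈ range k, i + b * k := by
  rw [sum_range_add, sum_add_distrib, sum_const, card_range, smul_eq_mul]
  ring

lemma mul_add_sum_range_id {n k b : ℕ} (hb : b + k = n + 1) :
    n * k + ∑ i ∈ range b, i = ∑ i ∈ range (n + 1), i + k * (k - 1) / 2 := by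
  have hk := sum_range_id_mul_two k
  rw [← hb, sum_range_id_add, ← sum_range_id]
  obtain rfl : n = b + k - 1 := by omega
  cases k with
  | zero => simp
  | succ c => simp only [Nat.add_sub_cancel] at hk ⊢; nlinarith

/-- A strictly decreasing sequence of parts is encoded by its set of parts. -/
theorem synchronized_neg_discrepancy_gf_general (m n k : ℕ) (hk2 : k ≤ n + 1) :
    ∑ P ∈ ((Finset.Icc 1 m).powerset ×ˢ (Finset.Icc 0 n).powerset).filter
        (fun P => P.2.card = P.1.card + k),
      (RatFunc.X : RatFunc ℚ) ^ (P.1.sum id + P.2.sum id) =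
      (RatFunc.X : RatFunc ℚ) ^ (k * (k - 1) / 2) * qbinom (m + n + 1) ((n : ℤ) - k + 1) := by
  obtain ⟨b, hb⟩ : ∃ b, b + k = n + 1 := ⟨n + 1 - k, by omega⟩
  have hN : m + n + 1 = b + (m + k) := by omega
  have hb' : (n : ℤ) - k + 1 = b := by omega
  refine mul_left_cancel₀ (pow_ne_zero (∑ i ∈ range (n + 1), i) RatFunc.X_ne_zero) ?_
  rw [pow_mul_sum_synchronized _ m n k b hb, hN, subsetSumGF_eq_qbinom, hb', ← mul_assoc,
    ← pow_add, ← mul_assoc, ← pow_add, mul_add_sum_range_id hb]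

/-- The generating function for synchronized partitions in `𝒮_{m,n}` with negative
discrepancy `-k` (`1 ≤ k ≤ n+1`): pairs `(α,β)` encoded as finsets `A ⊆ [1,m]`,
`B ⊆ [0,n]` with `card B = card A + k`, weighted by `q^{|A|+|B|}`. -/
theorem synchronized_neg_discrepancy_gf (m n k : ℕ) (hk1 : 1 ≤ k) (hk2 : k ≤ n + 1) :
    ∑ P ∈ ((Finset.Icc 1 m).powerset ×ˢ (Finset.Icc 0 n).powerset).filter
        (fun P => P.2.card = P.1.card + k),
      (RatFunc.X : RatFunc ℚ) ^ (P.1.sum id + P.2.sum id) =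
      (RatFunc.X : RatFunc ℚ) ^ (k * (k - 1) / 2) * qbinom (m + n + 1) ((n : ℤ) - k + 1) :=
  synchronized_neg_discrepancy_gf_general m n k hk2
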